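/- arXiv:1911.08441 — 5 statements merged into one kernel-verified Lean document; each statement's English description precedes it below -/
import Mathlib

section
/- Let f_1, …, f_n (n ≥ 2) be homogeneous polynomials of positive degree in R = K[x_0, x_1, …, x_n], where f_j = ∏_{i=1}^{ℓ_j} L_{j,i} is a product of linear forms satisfying condition (α). Then the ideal generated by the pairwise products, (f_i f_j : 1 ≤ i < j ≤ n), equals the intersection ⋂_{k=1}^n (f_1, …, f_{k−1}, f_{k+1}, …, f_n) of the n ideals generated by all but one of the f_j. -/
/-!
The heart of the matter is that each `f k` is a nonzerodivisor modulo `(f j : j ≠ k)`.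
For a linear form `x` outside the span of linear forms `S`, the substitution
`X i ↦ X i - P (X i)`, with `P` a projection onto `span K S`, is the identity modulo `(S)`,
kills `S` and does not kill `x`; as `K[X]` is a domain, `x` is regular modulo `(S)`.
Products of linear forms are added one row at a time: if `x` is regular modulo `I` and `g` is
regular modulo `I + (x)`, then `x` is regular modulo `I + (g)`, and condition (α) is what makes
both hypotheses available by induction. Given this regularity,
`⋂ₖ (f j : j ≠ k) = (f i * f j : i < j)` follows by induction on `n`, the key step being
`(f j : j ≠ a) ∩ (f a) = (f j : j ≠ a) * (f a)`.
-/

open MvPolynomial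

section CommRing

variable {R : Type*} [CommRing R]

theorem IsSMulRegular.finset_prod {M ι : Type*} [AddCommGroup M] [Module R M] {s : Finset ι}
    {f : ι → R} (h : ∀ i ∈ s, IsSMulRegular M (f i)) : IsSMulRegular M (∏ i ∈ s, f i) :=
  s.prod_induction _ _ (fun _ _ => IsSMulRegular.mul) (IsSMulRegular.one M) h

theorem isSMulRegular_quotient_sup_span_singleton_swap {I : Ideal R} {x g : R}
    (hx : IsSMulRegular (R ⧸ I) x) (hg : IsSMulRegular (R ⧸ (I ⊔ Ideal.span {x})) g) :
    IsSMulRegular (R ⧸ (I ⊔ Ideal.span {g})) x := by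
  refine (isSMulRegular_quotient_iff_mem_of_smul_mem _ _).mpr fun y hy => ?_
  obtain ⟨i, hi, _, hag, hxy⟩ := Submodule.mem_sup.mp hy
  obtain ⟨a, rfl⟩ := Ideal.mem_span_singleton'.mp hag
  rw [smul_eq_mul] at hxy
  have ha : g * a ∈ I ⊔ Ideal.span {x} := by
    rw [show g * a = x * y - i by linear_combination hxy]
    exact sub_mem (Ideal.mem_sup_right (Ideal.mul_mem_right _ _ (Ideal.mem_span_singleton_self x)))
      (Ideal.mem_sup_left hi)
  obtain ⟨j, hj, _, hdx, rfl⟩ :=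
    Submodule.mem_sup.mp (mem_of_isSMulRegular_quotient_of_smul_mem hg ha)
  obtain ⟨d, rfl⟩ := Ideal.mem_span_singleton'.mp hdx
  have hyd : y - d * g ∈ I := by
    refine mem_of_isSMulRegular_quotient_of_smul_mem hx ?_
    have : x • (y - d * g) = i + j * g := by rw [smul_eq_mul]; linear_combination -hxy
    rw [this]
    exact add_mem hi (Ideal.mul_mem_right _ _ hj)
  rw [← sub_add_cancel y (d * g)]
  exact add_mem (Ideal.mem_sup_left hyd)
    (Ideal.mem_sup_right (Ideal.mul_mem_left _ _ (Ideal.mem_span_singleton_self g)))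

theorem Ideal.inf_sup_span_singleton_le {A B : Ideal R} {g : R} (hBA : B ≤ A)
    (hg : IsSMulRegular (R ⧸ A) g) : A ⊓ (B ⊔ Ideal.span {g}) ≤ B ⊔ A * Ideal.span {g} := by
  rw [inf_comm, sup_inf_assoc_of_le _ hBA]
  refine sup_le_sup_left ?_ B
  rintro _ ⟨hyg, hyA⟩
  obtain ⟨b, rfl⟩ := Ideal.mem_span_singleton'.mp hyg
  exact Ideal.mul_mem_mul
    (mem_of_isSMulRegular_quotient_of_smul_mem hg (by rwa [smul_eq_mul, mul_comm]))
    (Ideal.mem_span_singleton_self g)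

theorem iInf_sup_span_image_erase_le {ι : Type*} [LinearOrder ι] (f : ι → R) {s : Finset ι}
    (hs : s.Nonempty) (Q : Ideal R)
    (hreg : ∀ k ∈ s, IsSMulRegular (R ⧸ (Q ⊔ Ideal.span (f '' ↑(s.erase k)))) (f k)) :
    ⨅ k ∈ s, (Q ⊔ Ideal.span (f '' ↑(s.erase k))) ≤
      Q ⊔ Ideal.span {p | ∃ i ∈ s, ∃ j ∈ s, i < j ∧ p = f i * f j} := by
  induction s using Finset.induction_on_max generalizing Q with
  | empty => exact absurd hs Finset.not_nonempty_empty
  | insert a s hlt ih =>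
    have ha : a ∉ s := fun h => lt_irrefl a (hlt a h)
    have herase_a : (insert a s).erase a = s := Finset.erase_insert ha
    rcases s.eq_empty_or_nonempty with rfl | hs
    · refine (iInf₂_le a (Finset.mem_insert_self a ∅)).trans ?_
      simp
    let P : Finset ι → Ideal R := fun t => Ideal.span {p | ∃ i ∈ t, ∃ j ∈ t, i < j ∧ p = f i * f j}
    set A := Q ⊔ Ideal.span (f '' s)
    have hreg_a : IsSMulRegular (R ⧸ A) (f a) := by
      have h := hreg a (Finset.mem_insert_self a s)
      rwa [herase_a] at h
    have hPA : Q ⊔ P s ≤ A := by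
      refine sup_le_sup_left (Ideal.span_le.mpr ?_) Q
      rintro _ ⟨i, -, j, hj, -, rfl⟩
      exact Ideal.mul_mem_left _ _ (Ideal.subset_span ⟨j, hj, rfl⟩)
    have hIH : ⨅ k ∈ insert a s, (Q ⊔ Ideal.span (f '' ↑((insert a s).erase k))) ≤
        Q ⊔ P s ⊔ Ideal.span {f a} := by
      have hJ : ∀ k ∈ s, Q ⊔ Ideal.span (f '' ↑((insert a s).erase k)) =
          Q ⊔ Ideal.span {f a} ⊔ Ideal.span (f '' ↑(s.erase k)) := fun k hk => by
        rw [Finset.erase_insert_of_ne (hlt k hk).ne', Finset.coe_insert, Set.image_insert_eq,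
          Ideal.span_insert, sup_assoc]
      calc _ ≤ ⨅ k ∈ s, (Q ⊔ Ideal.span (f '' ↑((insert a s).erase k))) :=
            biInf_mono fun k hk => Finset.mem_insert_of_mem hk
        _ ≤ ⨅ k ∈ s, (Q ⊔ Ideal.span {f a} ⊔ Ideal.span (f '' ↑(s.erase k))) :=
            iInf₂_mono fun k hk => (hJ k hk).le
        _ ≤ Q ⊔ Ideal.span {f a} ⊔ P s :=
            ih hs _ fun k hk => hJ k hk ▸ hreg k (Finset.mem_insert_of_mem hk)
        _ = Q ⊔ P s ⊔ Ideal.span {f a} := sup_right_comm _ _ _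
    have hAfa : A * Ideal.span {f a} ≤ Q ⊔ P (insert a s) := by
      rw [Ideal.sup_mul, Ideal.span_mul_span']
      refine sup_le (le_sup_of_le_left Ideal.mul_le_left) (le_sup_of_le_right ?_)
      refine Ideal.span_le.mpr ?_
      rintro _ ⟨_, ⟨j, hj, rfl⟩, _, rfl, rfl⟩
      exact Ideal.subset_span ⟨j, Finset.mem_insert_of_mem hj, a, Finset.mem_insert_self a s,
        hlt j hj, rfl⟩
    calc _ ≤ A ⊓ (Q ⊔ P s ⊔ Ideal.span {f a}) := by
          refine le_inf ((iInf₂_le a (Finset.mem_insert_self a s)).trans_eq ?_) hIH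
          rw [herase_a]
      _ ≤ Q ⊔ P s ⊔ A * Ideal.span {f a} := Ideal.inf_sup_span_singleton_le hPA hreg_a
      _ ≤ Q ⊔ P (insert a s) := by
          refine sup_le (sup_le_sup_left (Ideal.span_mono ?_) Q) hAfa
          rintro _ ⟨i, hi, j, hj, hij, rfl⟩
          exact ⟨i, Finset.mem_insert_of_mem hi, j, Finset.mem_insert_of_mem hj, hij, rfl⟩

end CommRing

section Selections

variable (K : Type*) {V ι : Type*} [Field K] [AddCommGroup V] [Module K V] {β : ι → Type*}

/-- Condition (α) for the rows `Λ j`, `j ∈ s`, relative to fixed vectors `v j`, `j ∈ T`: every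
choice of one entry from each row, completed by the `v j`, is linearly independent. -/
def SelectionsIndependent (Λ : ∀ j, β j → V) (v : ι → V) (T s : Set ι) : Prop :=
  ∀ c : ι → V, (∀ j ∈ s, c j ∈ Set.range (Λ j)) → Set.EqOn c v T → LinearIndepOn K c (T ∪ s)

variable {K} {Λ : ∀ j, β j → V} {v : ι → V} {T s : Set ι}

theorem selectionsIndependent_compl_singleton
    (hα : ∀ c : ∀ j, β j, LinearIndependent K fun j => Λ j (c j)) (k : ι) (i₀ : β k) :
    SelectionsIndependent K Λ (fun _ => Λ k i₀) {k} {k}ᶜ := by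
  intro c hc hck
  have hsel : ∀ j, ∃ i, Λ j i = c j := fun j => by
    by_cases hj : j = k
    · subst hj
      exact ⟨i₀, (hck rfl).symm⟩
    · exact hc j hj
  choose idx hidx using hsel
  rw [show c = fun j => Λ j (idx j) from funext fun j => (hidx j).symm]
  exact (hα idx).linearIndepOn _

theorem SelectionsIndependent.notMem_span (h : SelectionsIndependent K Λ v T ∅) {k : ι}
    (hk : k ∈ T) : v k ∉ Submodule.span K (v '' (T \ {k})) := by
  have hv := h v (fun _ => False.elim) (Set.eqOn_refl v T)
  rw [Set.union_empty] at hv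
  exact hv.notMem_span hk

variable [DecidableEq ι] {j₀ : ι}

theorem SelectionsIndependent.of_insert (h : SelectionsIndependent K Λ v T (insert j₀ s))
    (hT : j₀ ∉ T) (hs : j₀ ∉ s) (i₀ : β j₀) : SelectionsIndependent K Λ v T s := by
  intro c hc hcv
  have hc' := h (Function.update c j₀ (Λ j₀ i₀))
    (Set.forall_mem_insert.mpr ⟨by simp, fun j hj => by
      rw [Function.update_of_ne (ne_of_mem_of_not_mem hj hs)]; exact hc j hj⟩)
    (fun j hj => by rw [Function.update_of_ne (ne_of_mem_of_not_mem hj hT)]; exact hcv hj)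
  refine (hc'.mono (Set.union_subset_union_right T (Set.subset_insert j₀ s))).congr ?_
  intro j hj
  exact Function.update_of_ne (ne_of_mem_of_not_mem hj (by simp [hT, hs])) _ _

theorem SelectionsIndependent.update_insert (h : SelectionsIndependent K Λ v T (insert j₀ s))
    (hT : j₀ ∉ T) (i₀ : β j₀) :
    SelectionsIndependent K Λ (Function.update v j₀ (Λ j₀ i₀)) (insert j₀ T) s := by
  intro c hc hcv
  have hcj₀ : c j₀ = Λ j₀ i₀ := by simpa using hcv (Set.mem_insert j₀ T)
  rw [Set.insert_union, ← Set.union_insert]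
  refine h c (Set.forall_mem_insert.mpr ⟨⟨i₀, hcj₀.symm⟩, hc⟩) fun j hj => ?_
  rw [hcv (Set.mem_insert_of_mem j₀ hj), Function.update_of_ne (ne_of_mem_of_not_mem hj hT)]

end Selections

section Linear

variable {σ K : Type*} [Field K]

theorem isSMulRegular_quotient_span_of_notMem_span {S : Set (MvPolynomial σ K)}
    {x : MvPolynomial σ K} (hS : ∀ p ∈ S, p.IsHomogeneous 1) (hx : x.IsHomogeneous 1)
    (hxS : x ∉ Submodule.span K S) :
    IsSMulRegular (MvPolynomial σ K ⧸ Ideal.span S) x := by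
  set W := Submodule.span K S
  obtain ⟨P, hP⟩ := W.subtype.exists_leftInverse_of_injective W.ker_subtype
  have hPW : ∀ w ∈ W, (P w : MvPolynomial σ K) = w := fun w hw =>
    congrArg Subtype.val (LinearMap.congr_fun hP ⟨w, hw⟩)
  let π : MvPolynomial σ K →ₐ[K] MvPolynomial σ K :=
    aeval fun i => X i - (P (X i) : MvPolynomial σ K)
  have hπ_linear : ∀ p : MvPolynomial σ K, p.IsHomogeneous 1 → π p = p - P p := by
    intro p hp
    rw [← mem_homogeneousSubmodule, homogeneousSubmodule_one_eq_span_X] at hp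
    refine LinearMap.eqOn_span (f := π.toLinearMap) (g := LinearMap.id - W.subtype ∘ₗ P) ?_ hp
    rintro _ ⟨i, rfl⟩
    simp [π]
  have hπ_mod : (Ideal.Quotient.mkₐ K (Ideal.span S)).comp π = Ideal.Quotient.mkₐ K _ := by
    refine algHom_ext fun i => ?_
    simp only [AlgHom.comp_apply, π, aeval_X, map_sub, Ideal.Quotient.mkₐ_eq_mk, sub_eq_self,
      Ideal.Quotient.eq_zero_iff_mem]
    exact Submodule.span_le_restrictScalars K _ _ (P (X i)).2
  have hSπ : Ideal.span S ≤ RingHom.ker π := by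
    refine Ideal.span_le.mpr fun p hp => ?_
    rw [SetLike.mem_coe, RingHom.mem_ker, hπ_linear p (hS p hp),
      hPW p (Submodule.subset_span hp), sub_self]
  have hπx : π x ≠ 0 := by
    rw [hπ_linear x hx, sub_ne_zero]
    exact fun h => hxS (h ▸ (P x).2)
  refine (isSMulRegular_quotient_iff_mem_of_smul_mem _ _).mpr fun y hy => ?_
  have hπy : π y = 0 := by
    have := hSπ hy
    rw [RingHom.mem_ker, smul_eq_mul, map_mul] at this
    exact (mul_eq_zero.mp this).resolve_left hπx
  have := congrArg (· y) hπ_mod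
  simp only [AlgHom.comp_apply, hπy, map_zero, Ideal.Quotient.mkₐ_eq_mk] at this
  exact Ideal.Quotient.eq_zero_iff_mem.mp this.symm

variable {ι : Type*} [DecidableEq ι] {β : ι → Type*} [∀ j, Fintype (β j)]
  {Λ : ∀ j, β j → MvPolynomial σ K}

theorem SelectionsIndependent.isSMulRegular_quotient [∀ j, Nonempty (β j)]
    (hΛ : ∀ j i, (Λ j i).IsHomogeneous 1) {s : Finset ι} {v : ι → MvPolynomial σ K} {T : Set ι}
    {k : ι} (hv : ∀ j ∈ T, (v j).IsHomogeneous 1) (hk : k ∈ T) (hTs : Disjoint T s)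
    (h : SelectionsIndependent K Λ v T s) :
    IsSMulRegular (MvPolynomial σ K ⧸
      Ideal.span (v '' (T \ {k}) ∪ (fun j => ∏ i, Λ j i) '' s)) (v k) := by
  induction s using Finset.induction_on generalizing v T k with
  | empty =>
    rw [Finset.coe_empty] at h ⊢
    rw [Set.image_empty, Set.union_empty]
    exact isSMulRegular_quotient_span_of_notMem_span
      (by rintro _ ⟨j, hj, rfl⟩; exact hv j hj.1) (hv k hk) (h.notMem_span hk)
  | insert j₀ s hj₀s ih =>
    rw [Finset.coe_insert] at h hTs ⊢
    obtain ⟨hj₀T, hTs⟩ := Set.disjoint_insert_right.mp hTs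
    -- Split off row `j₀`; its entries are handled by moving `v k` among the fixed forms.
    set F := fun j => ∏ i, Λ j i
    set I := Ideal.span (v '' (T \ {k}) ∪ F '' s)
    have hx : IsSMulRegular (MvPolynomial σ K ⧸ I) (v k) :=
      ih hv hk hTs (h.of_insert hj₀T hj₀s (Classical.arbitrary _))
    have hg : IsSMulRegular (MvPolynomial σ K ⧸ (I ⊔ Ideal.span {v k})) (F j₀) := by
      refine IsSMulRegular.finset_prod fun i _ => ?_
      have hvT : Set.EqOn (Function.update v j₀ (Λ j₀ i)) v T := fun j hj =>
        Function.update_of_ne (ne_of_mem_of_not_mem hj hj₀T) _ _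
      have hreg := ih (v := Function.update v j₀ (Λ j₀ i)) (T := insert j₀ T) (k := j₀)
        (Set.forall_mem_insert.mpr ⟨by simpa using hΛ j₀ i, fun j hj => hvT hj ▸ hv j hj⟩)
        (Set.mem_insert j₀ T) (Set.disjoint_insert_left.mpr ⟨hj₀s, hTs⟩)
        (h.update_insert hj₀T i)
      rwa [Function.update_self, Set.insert_sdiff_self_of_notMem hj₀T, hvT.image_eq,
        ← Set.insert_eq_of_mem hk, ← Set.insert_sdiff_singleton, Set.image_insert_eq,
        Set.insert_union, Ideal.span_insert, sup_comm] at hreg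
    rw [Set.image_insert_eq, Set.union_insert, Ideal.span_insert, sup_comm]
    exact isSMulRegular_quotient_sup_span_singleton_swap hx hg

theorem isSMulRegular_quotient_span_prod_of_linearIndependent [Fintype ι] [∀ j, Nonempty (β j)]
    (hΛ : ∀ j i, (Λ j i).IsHomogeneous 1)
    (hα : ∀ c : ∀ j, β j, LinearIndependent K fun j => Λ j (c j)) (k : ι) :
    IsSMulRegular (MvPolynomial σ K ⧸
      Ideal.span ((fun j => ∏ i, Λ j i) '' ↑(Finset.univ.erase k))) (∏ i, Λ k i) := by
  refine IsSMulRegular.finset_prod fun i₀ _ => ?_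
  have hsel := selectionsIndependent_compl_singleton hα k i₀
  rw [Set.compl_eq_univ_sdiff, ← Finset.coe_univ, ← Finset.coe_erase] at hsel
  have := hsel.isSMulRegular_quotient hΛ (by simpa using hΛ k i₀) (Set.mem_singleton k) (by simp)
  rwa [Set.sdiff_self, Set.image_empty, Set.empty_union] at this

end Linear

theorem grid_ideal_eq_inter_of_condition_alpha_general
    (K : Type) [Field K] (n : ℕ) (hn : 2 ≤ n)
    (ℓ : Fin n → ℕ) (hℓ : ∀ j, 0 < ℓ j)
    (L : (j : Fin n) → Fin (ℓ j) → MvPolynomial (Fin (n + 1)) K)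
    (hLhom : ∀ j i, (L j i).IsHomogeneous 1)
    (hα : ∀ c : (j : Fin n) → Fin (ℓ j), LinearIndependent K (fun j => L j (c j)))
    (f : Fin n → MvPolynomial (Fin (n + 1)) K)
    (hf : ∀ j, f j = ∏ i : Fin (ℓ j), L j i) :
    Ideal.span {g : MvPolynomial (Fin (n + 1)) K | ∃ i j : Fin n, i < j ∧ g = f i * f j} =
      ⨅ k : Fin n, Ideal.span (f '' {j : Fin n | j ≠ k}) := by
  obtain rfl : f = fun j => ∏ i, L j i := funext hf
  have : ∀ j, Nonempty (Fin (ℓ j)) := fun j => ⟨⟨0, hℓ j⟩⟩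
  have hreg := isSMulRegular_quotient_span_prod_of_linearIndependent hLhom hα
  refine le_antisymm (Ideal.span_le.mpr ?_) ?_
  · rintro _ ⟨i, j, hij, rfl⟩
    refine Submodule.mem_iInf _ |>.mpr fun k => ?_
    rcases ne_or_eq i k with hik | rfl
    · exact Ideal.mul_mem_right _ _ (Ideal.subset_span ⟨i, hik, rfl⟩)
    · exact Ideal.mul_mem_left _ _ (Ideal.subset_span ⟨j, hij.ne', rfl⟩)
  · have := iInf_sup_span_image_erase_le (fun j => ∏ i, L j i) (s := Finset.univ)
      ⟨⟨0, by omega⟩, Finset.mem_univ _⟩ ⊥ fun k _ => by rw [bot_sup_eq]; exact hreg k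
    simp only [Finset.mem_univ, true_and, iInf_pos, bot_sup_eq, Finset.coe_erase,
      Finset.coe_univ, ← Set.compl_eq_univ_sdiff] at this
    exact this

/-- For linear forms `L j i` in `R = K[x_0,…,x_n]` satisfying condition (α)
(every selection of one form per row is `K`-linearly independent), with
`f j = ∏ i, L j i` homogeneous of positive degree, the ideal generated by the
pairwise products `f i * f j` (`i < j`) equals the intersection of the `n` ideals
generated by all but one of the `f j`. -/
theorem grid_ideal_eq_inter_of_condition_alpha
    (K : Type) [Field K] [Infinite K] (n : ℕ) (hn : 2 ≤ n)
    (ℓ : Fin n → ℕ) (hℓ : ∀ j, 0 < ℓ j)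
    (L : (j : Fin n) → Fin (ℓ j) → MvPolynomial (Fin (n + 1)) K)
    (hLhom : ∀ j i, (L j i).IsHomogeneous 1)
    (hα : ∀ c : (j : Fin n) → Fin (ℓ j), LinearIndependent K (fun j => L j (c j)))
    (f : Fin n → MvPolynomial (Fin (n + 1)) K)
    (hf : ∀ j, f j = ∏ i : Fin (ℓ j), L j i) :
    Ideal.span {g : MvPolynomial (Fin (n + 1)) K | ∃ i j : Fin n, i < j ∧ g = f i * f j} =
      ⨅ k : Fin n, Ideal.span (f '' {j : Fin n | j ≠ k}) :=
  grid_ideal_eq_inter_of_condition_alpha_general K n hn ℓ hℓ L hLhom hα f hf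
end

section
/- Let K be an infinite field, n ≥ 2, and ℓ_1, …, ℓ_n positive integers. In S = K[x_1, …, x_n], the intersection ⋂_{k=1}^n (x_1^{ℓ_1}, …, x_{k−1}^{ℓ_{k−1}}, x_{k+1}^{ℓ_{k+1}}, …, x_n^{ℓ_n}) equals the ideal generated by the set { x_i^{ℓ_i} x_j^{ℓ_j} : 1 ≤ i < j ≤ n }, and this set is a minimal generating set, i.e. no proper subset of it generates the ideal. -/
open MvPolynomial

/-- In `S = K[x_1,…,x_n]` (`n ≥ 2`, `ℓ_j > 0`), the intersection
`⋂_{k=1}^n (x_1^{ℓ_1},…,x_{k-1}^{ℓ_{k-1}},x_{k+1}^{ℓ_{k+1}},…,x_n^{ℓ_n})` equals the ideal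
generated by `{x_i^{ℓ_i} x_j^{ℓ_j} : i < j}`, and that set is a minimal generating set:
no proper subset of it generates the ideal. -/
theorem omega_eq_span_pairwise_products_and_minimal
    (K : Type) [Field K] [Infinite K] (n : ℕ) (hn : 2 ≤ n)
    (ℓ : Fin n → ℕ) (hℓ : ∀ j, 0 < ℓ j) :
    (⨅ k : Fin n,
        Ideal.span ((fun j : Fin n => (X j : MvPolynomial (Fin n) K) ^ ℓ j) '' {j | j ≠ k})) =
      Ideal.span {g : MvPolynomial (Fin n) K |
        ∃ i j : Fin n, i < j ∧ g = X i ^ ℓ i * X j ^ ℓ j} ∧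
    ∀ B ⊂ {g : MvPolynomial (Fin n) K | ∃ i j : Fin n, i < j ∧ g = X i ^ ℓ i * X j ^ ℓ j},
      Ideal.span B ≠
        Ideal.span {g : MvPolynomial (Fin n) K |
          ∃ i j : Fin n, i < j ∧ g = X i ^ ℓ i * X j ^ ℓ j} := by
  classical
  set E : Set (Fin n →₀ ℕ) :=
    {d | ∃ i j : Fin n, i < j ∧ d = Finsupp.single i (ℓ i) + Finsupp.single j (ℓ j)} with hE
  have hmon : ∀ i j : Fin n, (X i : MvPolynomial (Fin n) K) ^ ℓ i * X j ^ ℓ j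
      = monomial (Finsupp.single i (ℓ i) + Finsupp.single j (ℓ j)) (1 : K) := by
    intro i j
    rw [X_pow_eq_monomial, X_pow_eq_monomial, monomial_mul, one_mul]
  have hG : {g : MvPolynomial (Fin n) K | ∃ i j : Fin n, i < j ∧ g = X i ^ ℓ i * X j ^ ℓ j}
      = (fun d => monomial d (1 : K)) '' E := by
    ext g
    constructor
    · rintro ⟨i, j, hij, rfl⟩
      exact ⟨_, ⟨i, j, hij, rfl⟩, (hmon i j).symm⟩
    · rintro ⟨d, ⟨i, j, hij, rfl⟩, rfl⟩
      exact ⟨i, j, hij, (hmon i j).symm⟩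
  have hGk : ∀ k : Fin n,
      ((fun j : Fin n => (X j : MvPolynomial (Fin n) K) ^ ℓ j) '' {j | j ≠ k})
        = (fun d => monomial d (1 : K)) '' ((fun j => Finsupp.single j (ℓ j)) '' {j | j ≠ k}) := by
    intro k
    rw [Set.image_image]
    refine Set.image_congr fun j _ => ?_
    rw [X_pow_eq_monomial]
  constructor
  · ext f
    rw [hG, Ideal.mem_iInf]
    simp only [hGk, mem_ideal_span_monomial_image]
    constructor
    · intro h d hd
      -- for each k, get j ≠ k with single ≤ d
      have h' : ∀ k : Fin n, ∃ j : Fin n, j ≠ k ∧ Finsupp.single j (ℓ j) ≤ d := by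
        intro k
        obtain ⟨si, ⟨j, hj, rfl⟩, hle⟩ := h k d hd
        exact ⟨j, hj, hle⟩
      have hn0 : 0 < n := by omega
      obtain ⟨j, hj0, hjle⟩ := h' ⟨0, hn0⟩
      obtain ⟨i, hij, hile⟩ := h' j
      have hsum : ∀ a b : Fin n, a ≠ b → Finsupp.single a (ℓ a) ≤ d →
          Finsupp.single b (ℓ b) ≤ d →
          Finsupp.single a (ℓ a) + Finsupp.single b (ℓ b) ≤ d := by
        intro a b hab ha hb
        intro m
        have h1 := ha m
        have h2 := hb m
        simp only [Finsupp.add_apply, Finsupp.single_apply] at h1 h2 ⊢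
        split_ifs at h1 h2 ⊢ with hA hB
        · exact absurd (hA.trans hB.symm) hab
        all_goals omega
      rcases lt_or_gt_of_ne hij with hlt | hgt
      · exact ⟨_, ⟨i, j, hlt, rfl⟩, hsum i j hij hile hjle⟩
      · exact ⟨_, ⟨j, i, hgt, rfl⟩, hsum j i (Ne.symm hij) hjle hile⟩
    · intro h k d hd
      obtain ⟨si, ⟨i, j, hij, rfl⟩, hle⟩ := h d hd
      rcases eq_or_ne i k with rfl | hik
      · exact ⟨_, ⟨j, hij.ne', rfl⟩,
          le_trans (le_add_self.trans_eq rfl) hle⟩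
      · exact ⟨_, ⟨i, hik, rfl⟩, le_trans le_self_add hle⟩
  · rintro B ⟨hBsub, hBne⟩ heq
    obtain ⟨g, hgG, hgB⟩ := Set.exists_of_ssubset ⟨hBsub, hBne⟩
    obtain ⟨i, j, hij, rfl⟩ := hgG
    set EB : Set (Fin n →₀ ℕ) := {d ∈ E | monomial d (1 : K) ∈ B} with hEB
    have hB : B = (fun d => monomial d (1 : K)) '' EB := by
      ext g
      constructor
      · intro hg
        obtain ⟨d, hd, rfl⟩ := (hG ▸ hBsub) hg
        exact ⟨d, ⟨hd, hg⟩, rfl⟩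
      · rintro ⟨d, ⟨hd, hdB⟩, rfl⟩
        exact hdB
    have hmem : (X i : MvPolynomial (Fin n) K) ^ ℓ i * X j ^ ℓ j ∈ Ideal.span B := by
      rw [heq]
      exact Ideal.subset_span ⟨i, j, hij, rfl⟩
    rw [hB, hmon, mem_ideal_span_monomial_image] at hmem
    set d0 : Fin n →₀ ℕ := Finsupp.single i (ℓ i) + Finsupp.single j (ℓ j) with hd0
    have hd0supp : d0 ∈ (monomial d0 (1 : K)).support := by
      rw [support_monomial]
      simp
    obtain ⟨d', ⟨⟨a, b, hab, rfl⟩, hdB⟩, hle⟩ := hmem d0 hd0supp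
    -- show a ∈ {i,j}, b ∈ {i,j}
    have key : ∀ c : Fin n, 0 < (Finsupp.single a (ℓ a) + Finsupp.single b (ℓ b)) c →
        c = i ∨ c = j := by
      intro c hc
      have := lt_of_lt_of_le hc (hle c)
      by_contra hcon
      push_neg at hcon
      simp [hd0, Finsupp.single_apply, Ne.symm hcon.1, Ne.symm hcon.2] at this
    have ha : a = i ∨ a = j := by
      refine key a ?_
      simp [Finsupp.single_apply, hab.ne, hℓ a]
    have hb : b = i ∨ b = j := by
      refine key b ?_
      simp [Finsupp.single_apply, hab.ne', hℓ b]
    have hai : a = i ∧ b = j := by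
      rcases ha with rfl | rfl
      · rcases hb with rfl | rfl
        · exact absurd rfl hab.ne
        · exact ⟨rfl, rfl⟩
      · rcases hb with rfl | rfl
        · exact absurd (hab.trans hij) (lt_irrefl _)
        · exact absurd rfl hab.ne
    obtain ⟨rfl, rfl⟩ := hai
    exact hgB (by rw [hmon]; exact hdB)
end

section
/- Let L_{j,i} ∈ R = K[x_0, x_1, …, x_n] (1 ≤ j ≤ n, 1 ≤ i ≤ ℓ_j, n ≥ 2) be linear forms satisfying condition (α'), and set f_j = ∏_{i=1}^{ℓ_j} L_{j,i} and I = (f_i f_j : 1 ≤ i < j ≤ n). Then I = ⋂_{k=1}^n ⋂_{1 ≤ i_h ≤ ℓ_h for h ≠ k} (L_{1,i_1}, …, L_{k−1,i_{k−1}}, L_{k+1,i_{k+1}}, …, L_{n,i_n}), an intersection of prime ideals each generated by n−1 linearly independent linear forms; in particular I is a radical ideal, so a complete pseudo-grid of lines is a reduced configuration of lines. -/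
open MvPolynomial

/-!
Write `Q_U(c)` for the ideal generated by the selected forms `L j (c j)`, `j ∈ U`. Linearly
independent linear forms are variables in suitable coordinates, so each `Q_U(c)` is prime. A linear
form in `Q_U(c)` lies in the linear span of the generators, so by (α') a form `L m i` lies in
`Q_U(c)` only if it is one of them. Hence products of unselected forms are nonzerodivisors modulo
intersections of such primes, and the identity `(A + (g)) ∩ (A + (h)) = A + (gh)`, valid when `h`
is regular modulo `A + (g)`, gives by induction over the families `(f_j : j ∈ U) = ⋂_c Q_U(c)`.
In particular `f_k` is regular modulo `J_k = (f_j : j ≠ k)`, and `J_k ∩ (B + (f_k)) = B` for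
`I ⊆ B ⊆ J_k`; peeling off one `J_k` at a time yields `⋂_k J_k = I`. An intersection of primes is
radical.
-/

section IdealLemmas

variable {R : Type*} [CommRing R]

theorem Ideal.inf_sup_span_singleton_of_regular {J B : Ideal R} {h : R} (hB : B ≤ J)
    (hreg : ∀ r, r * h ∈ J → r ∈ J) : J ⊓ (B ⊔ Ideal.span {h}) = B ⊔ J * Ideal.span {h} := by
  rw [inf_comm, sup_inf_assoc_of_le _ hB, inf_comm]
  congr 1
  refine le_antisymm (fun x ⟨hxJ, hxh⟩ => ?_) Ideal.mul_le_inf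
  obtain ⟨r, rfl⟩ := Ideal.mem_span_singleton'.1 hxh
  exact Ideal.mul_mem_mul (hreg r hxJ) (Ideal.mem_span_singleton_self h)

theorem Ideal.iInf_sup_span_singleton {ι : Type*} [DecidableEq ι] (A : Ideal R) (g : ι → R)
    (hreg : ∀ i (t : Finset ι), i ∉ t →
      ∀ r, r * ∏ j ∈ t, g j ∈ A ⊔ Ideal.span {g i} → r ∈ A ⊔ Ideal.span {g i})
    (s : Finset ι) : ⨅ i ∈ s, (A ⊔ Ideal.span {g i}) = A ⊔ Ideal.span {∏ i ∈ s, g i} := by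
  induction s using Finset.induction_on with
  | empty => simp
  | insert a s ha ih =>
    rw [Finset.iInf_insert, ih, Ideal.inf_sup_span_singleton_of_regular le_sup_left (hreg a s ha),
      sup_mul, Ideal.span_singleton_mul_span_singleton, ← sup_assoc,
      sup_eq_left.2 (Ideal.mul_le_left (I := A)), Finset.prod_insert ha]

end IdealLemmas

section SelectionIdeals

variable {R : Type*} [CommRing R] {ι : Type*} {κ : ι → Type*}

def selIdeal (L : (j : ι) → κ j → R) (U : Set ι) (c : (j : ι) → κ j) : Ideal R :=
  Ideal.span ((fun j => L j (c j)) '' U)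

def familyProd [∀ j, Fintype (κ j)] (L : (j : ι) → κ j → R) (j : ι) : R :=
  ∏ i, L j i

variable {L : (j : ι) → κ j → R}

theorem selIdeal_insert (m : ι) (U : Set ι) (c : (j : ι) → κ j) :
    selIdeal L (insert m U) c = Ideal.span {L m (c m)} ⊔ selIdeal L U c := by
  rw [selIdeal, Set.image_insert_eq, Ideal.span_insert, selIdeal]

theorem selIdeal_congr {U : Set ι} {c c' : (j : ι) → κ j} (h : ∀ j ∈ U, c j = c' j) :
    selIdeal L U c = selIdeal L U c' := by
  rw [selIdeal, selIdeal, Set.image_congr fun j hj => by rw [h j hj]]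

theorem iInf_agreeOff_insert {α : Type*} [CompleteLattice α] [DecidableEq ι] (m : ι) (T : Set ι)
    (c : (j : ι) → κ j) (Φ : ((j : ι) → κ j) → α) :
    ⨅ (d) (_ : ∀ j ∉ insert m T, d j = c j), Φ d =
      ⨅ (i) (d) (_ : ∀ j ∉ T, d j = Function.update c m i j), Φ d := by
  refine le_antisymm (le_iInf fun i => le_iInf₂ fun d hd => iInf₂_le d fun j hj => ?_)
    (le_iInf₂ fun d hd => iInf_le_of_le (d m) (iInf₂_le d fun j hj => ?_))
  · rw [Set.mem_insert_iff, not_or] at hj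
    rw [hd j hj.2, Function.update_of_ne hj.1]
  · rcases eq_or_ne j m with rfl | hjm
    · rw [Function.update_self]
    · rw [Function.update_of_ne hjm, hd j (by simp [hjm, hj])]

structure IsPrimeGrid (L : (j : ι) → κ j → R) : Prop where
  isPrime : ∀ U c, (selIdeal L U c).IsPrime
  selected_of_mem : ∀ {U c m i}, L m i ∈ selIdeal L U c → m ∈ U ∧ c m = i

namespace IsPrimeGrid

theorem prod_notMem_selIdeal (hL : IsPrimeGrid L) {U : Set ι} {c : (j : ι) → κ j} {m : ι}
    {t : Finset (κ m)} (ht : ∀ i ∈ t, ¬(m ∈ U ∧ c m = i)) : ∏ i ∈ t, L m i ∉ selIdeal L U c := by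
  have := hL.isPrime U c
  rw [Ideal.IsPrime.prod_mem_iff]
  rintro ⟨i, hi, hmem⟩
  exact ht i hi (hL.selected_of_mem hmem)

variable [∀ j, Fintype (κ j)]

theorem iInf_selIdeal_agreeOff (hL : IsPrimeGrid L) {U : Set ι} (T : Finset ι) (hTU : ↑T ⊆ U)
    (c : (j : ι) → κ j) :
    ⨅ (d) (_ : ∀ j ∉ (T : Set ι), d j = c j), selIdeal L U d =
      selIdeal L (U \ T) c ⊔ Ideal.span (familyProd L '' T) := by
  classical
  induction T using Finset.induction_on generalizing c with
  | empty => simp [← funext_iff]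
  | insert m T hm ih =>
    have hmU : m ∈ U := hTU (by simp)
    set A := selIdeal L (U \ insert m ↑T) c ⊔ Ideal.span (familyProd L '' T)
    have key : ∀ i, ⨅ (d) (_ : ∀ j ∉ (T : Set ι), d j = Function.update c m i j),
        selIdeal L U d = A ⊔ Ideal.span {L m i} := by
      intro i
      have hU : U \ ↑T = insert m (U \ insert m ↑T) := by
        ext j; by_cases hj : j = m <;> simp [hj, hmU, hm]
      rw [ih (fun j hj => hTU (by simp [hj])), hU, selIdeal_insert, Function.update_self,
        selIdeal_congr (c' := c) fun j hj => Function.update_of_ne (by rintro rfl; simp at hj) _ _,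
        sup_comm (Ideal.span {_}), sup_right_comm]
    rw [Finset.coe_insert, iInf_agreeOff_insert]
    simp_rw [key]
    have hprod := Ideal.iInf_sup_span_singleton A (L m) ?_ Finset.univ
    · simp only [Finset.mem_univ, iInf_true] at hprod
      rw [hprod, Set.image_insert_eq, Ideal.span_insert, sup_comm (Ideal.span {_}), ← sup_assoc]
      rfl
    -- the primes cut out by `A + (L m i)` all select `i` at `m`, so avoid every other `L m i'`
    intro i t hit r hr
    rw [← key i] at hr ⊢
    simp only [Submodule.mem_iInf] at hr ⊢
    intro d hd
    have hdm : d m = i := by simpa using hd m (by simpa using hm)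
    exact ((hL.isPrime U d).mem_or_mem (hr d hd)).resolve_right
      (hL.prod_notMem_selIdeal fun i' hi' h => hit (by rwa [← hdm, h.2]))

variable [∀ j, Nonempty (κ j)] [Finite ι]

theorem iInf_selIdeal (hL : IsPrimeGrid L) (U : Set ι) :
    ⨅ d, selIdeal L U d = Ideal.span (familyProd L '' U) := by
  classical
  lift U to Finset ι using U.toFinite
  let c : (j : ι) → κ j := fun j => Classical.arbitrary _
  have h := hL.iInf_selIdeal_agreeOff U subset_rfl c
  rw [Set.sdiff_self, selIdeal, Set.image_empty, Ideal.span_empty, bot_sup_eq] at h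
  rw [← h]
  refine le_antisymm (le_iInf₂ fun d _ => iInf_le _ d) (le_iInf fun d => ?_)
  refine (iInf₂_le (U.piecewise d c) fun j hj => U.piecewise_eq_of_notMem _ _ hj).trans_eq ?_
  exact selIdeal_congr fun j hj => U.piecewise_eq_of_mem _ _ hj

theorem mem_of_mul_familyProd_mem (hL : IsPrimeGrid L) {U : Set ι} {m : ι} (hm : m ∉ U) {r : R}
    (hr : r * familyProd L m ∈ Ideal.span (familyProd L '' U)) :
    r ∈ Ideal.span (familyProd L '' U) := by
  rw [← hL.iInf_selIdeal U, Submodule.mem_iInf] at hr ⊢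
  exact fun d => ((hL.isPrime U d).mem_or_mem (hr d)).resolve_right
    (hL.prod_notMem_selIdeal fun i _ h => hm h.1)

end IsPrimeGrid

end SelectionIdeals

section PairIdeal

variable {R : Type*} [CommRing R] {ι : Type*} [LinearOrder ι]

theorem span_pairs_le_span_compl (f : ι → R) (k : ι) :
    Ideal.span {g | ∃ i j : ι, i < j ∧ g = f i * f j} ≤ Ideal.span (f '' {k}ᶜ) := by
  rw [Ideal.span_le]
  rintro _ ⟨i, j, hij, rfl⟩
  rcases eq_or_ne j k with rfl | hjk
  · exact Ideal.mul_mem_right _ _ (Ideal.subset_span ⟨i, hij.ne, rfl⟩)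
  · exact Ideal.mul_mem_left _ _ (Ideal.subset_span ⟨j, hjk, rfl⟩)

theorem span_compl_mul_le_span_pairs (f : ι → R) (k : ι) :
    Ideal.span (f '' {k}ᶜ) * Ideal.span {f k} ≤
      Ideal.span {g | ∃ i j : ι, i < j ∧ g = f i * f j} := by
  rw [Ideal.span_mul_span', Ideal.span_le]
  rintro _ ⟨_, ⟨j, hjk, rfl⟩, _, rfl, rfl⟩
  apply Ideal.subset_span
  rcases lt_or_gt_of_ne hjk with h | h
  · exact ⟨j, k, h, rfl⟩
  · exact ⟨k, j, h, mul_comm _ _⟩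

variable {κ : ι → Type*} [∀ j, Fintype (κ j)] [∀ j, Nonempty (κ j)]
  {L : (j : ι) → κ j → R}

theorem IsPrimeGrid.iInf_span_familyProd_compl [Finite ι] (hL : IsPrimeGrid L) {V : Finset ι}
    (hV : V.Nonempty) :
    ⨅ k ∈ V, Ideal.span (familyProd L '' {k}ᶜ) =
      Ideal.span {g | ∃ i j : ι, i < j ∧ g = familyProd L i * familyProd L j} ⊔
        Ideal.span (familyProd L '' (↑V)ᶜ) := by
  induction hV using Finset.Nonempty.cons_induction with
  | singleton a =>
    rw [Finset.coe_singleton, sup_eq_right.2 (span_pairs_le_span_compl _ a)]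
    simp
  | cons a V ha hV ih =>
    have hcompl : (↑V : Set ι)ᶜ = insert a (↑(Finset.cons a V ha))ᶜ := by
      ext j; by_cases hj : j = a <;> simp [hj, ha]
    -- with `B = I + (f_j : j ∉ insert a V) ≤ J_a`: `J_a ∩ (B + (f_a)) = B + J_a f_a = B`
    rw [Finset.cons_eq_insert, Finset.iInf_insert, ih, hcompl, Set.image_insert_eq,
      Ideal.span_insert, sup_comm (Ideal.span {_}), ← sup_assoc, Finset.cons_eq_insert,
      Ideal.inf_sup_span_singleton_of_regular
        (sup_le (span_pairs_le_span_compl _ a) (Ideal.span_mono (Set.image_mono (by simp))))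
        fun r hr => hL.mem_of_mul_familyProd_mem (by simp) hr,
      sup_eq_left.2 ((span_compl_mul_le_span_pairs _ a).trans le_sup_left)]

theorem IsPrimeGrid.span_pairs_eq_iInf_selIdeal [Fintype ι] [Nonempty ι] (hL : IsPrimeGrid L) :
    Ideal.span {g | ∃ i j : ι, i < j ∧ g = familyProd L i * familyProd L j} =
      ⨅ (k) (c), selIdeal L {k}ᶜ c := by
  have := hL.iInf_span_familyProd_compl (Finset.univ_nonempty (α := ι))
  simp_rw [hL.iInf_selIdeal]
  simpa using this.symm

end PairIdeal

section LinearForms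

theorem MvPolynomial.ker_aeval_ite_X {σ R : Type*} [CommRing R] (T : Set σ)
    [DecidablePred (· ∈ T)] :
    RingHom.ker (aeval (fun t => if t ∈ T then 0 else X t) :
        MvPolynomial σ R →ₐ[R] MvPolynomial σ R) =
      Ideal.span (X '' T) := by
  refine le_antisymm (fun p hp => ?_) (Ideal.span_le.2 ?_)
  · have hmk : (Ideal.Quotient.mkₐ R (Ideal.span (X '' T))).comp
        (aeval fun t => if t ∈ T then 0 else X t) = Ideal.Quotient.mkₐ R _ := by
      refine MvPolynomial.algHom_ext fun t => ?_
      by_cases ht : t ∈ T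
      · have hX : X t ∈ Ideal.span (X '' T : Set (MvPolynomial σ R)) :=
          Ideal.subset_span (Set.mem_image_of_mem X ht)
        simpa [ht] using (Ideal.Quotient.eq_zero_iff_mem.2 hX).symm
      · simp [ht]
    rw [← Ideal.Quotient.eq_zero_iff_mem, ← Ideal.Quotient.mkₐ_eq_mk R, ← hmk, AlgHom.comp_apply,
      RingHom.mem_ker.1 hp, map_zero]
  · rintro _ ⟨t, ht, rfl⟩
    simp [ht]

theorem MvPolynomial.isPrime_span_X_image {σ R : Type*} [CommRing R] [IsDomain R] (T : Set σ) :
    (Ideal.span (X '' T : Set (MvPolynomial σ R))).IsPrime := by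
  classical
  rw [← ker_aeval_ite_X]
  exact RingHom.ker_isPrime _

theorem MvPolynomial.homogeneousComponent_one_mul {σ R : Type*} [CommRing R]
    {v : MvPolynomial σ R} (hv : v.IsHomogeneous 1) (r : MvPolynomial σ R) :
    homogeneousComponent 1 (r * v) = coeff 0 r • v := by
  classical
  induction r using MvPolynomial.induction_on' with
  | monomial d c =>
    rw [homogeneousComponent_of_mem ((isHomogeneous_monomial c rfl).mul hv), coeff_monomial]
    rcases eq_or_ne d 0 with rfl | hd
    · simp [smul_eq_C_mul]
    · simp [hd, Finsupp.degree_eq_zero_iff]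
  | add p q hp hq => simp [add_mul, hp, hq, add_smul]

theorem MvPolynomial.mem_span_of_isHomogeneous_of_mem_ideal_span {σ R : Type*} [CommRing R]
    {s : Set (MvPolynomial σ R)} (hs : ∀ v ∈ s, v.IsHomogeneous 1) {p : MvPolynomial σ R}
    (hp : p.IsHomogeneous 1) (hmem : p ∈ Ideal.span s) : p ∈ Submodule.span R s := by
  obtain ⟨c, hc, rfl⟩ := Submodule.mem_span_set.1 hmem
  rw [← homogeneousComponent_eq_self hp, Finsupp.sum, map_sum]
  refine Submodule.sum_mem _ fun v hv => ?_
  rw [smul_eq_mul, homogeneousComponent_one_mul (hs v (hc hv))]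
  exact Submodule.smul_mem _ _ (Submodule.subset_span (hc hv))

variable {K : Type*} [Field K] {σ : Type*} [Fintype σ]

theorem MvPolynomial.mem_range_linearCombination_X {p : MvPolynomial σ K}
    (hp : p.IsHomogeneous 1) : p ∈ LinearMap.range (Fintype.linearCombination K (X (R := K))) := by
  rwa [Fintype.range_linearCombination, ← homogeneousSubmodule_one_eq_span_X]

theorem MvPolynomial.exists_algEquiv_X_eq_linearCombination {ι : Type*}
    (b : Module.Basis ι K (σ → K)) :
    ∃ Φ : MvPolynomial ι K ≃ₐ[K] MvPolynomial σ K,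
      ∀ i, Φ (X i) = Fintype.linearCombination K X (b i) := by
  let E := SymmetricAlgebra.equivMvPolynomial (Pi.basisFun K σ)
  have hE : E.toLinearMap ∘ₗ SymmetricAlgebra.ι K (σ → K) = Fintype.linearCombination K X :=
    (Pi.basisFun K σ).ext fun t => by
      classical
      simp only [LinearMap.comp_apply, AlgEquiv.toLinearMap_apply, E,
        SymmetricAlgebra.equivMvPolynomial_ι_apply]
      rw [Pi.basisFun_apply, Fintype.linearCombination_apply_single, one_smul]
  refine ⟨(SymmetricAlgebra.equivMvPolynomial b).symm.trans E, fun i => ?_⟩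
  simp [← hE]

theorem MvPolynomial.isPrime_span_range_of_linearIndependent {κ : Type*}
    {v : κ → MvPolynomial σ K} (hv : ∀ k, (v k).IsHomogeneous 1) (hli : LinearIndependent K v) :
    (Ideal.span (Set.range v)).IsPrime := by
  choose w hw using fun k => mem_range_linearCombination_X (hv k)
  have hvw : Fintype.linearCombination K X ∘ w = v := _root_.funext hw
  have hwli : LinearIndependent K w := .of_comp _ (hvw ▸ hli)
  have hs := (linearIndepOn_id_range_iff hwli.injective).2 hwli
  obtain ⟨Φ, hΦ⟩ := exists_algEquiv_X_eq_linearCombination (Module.Basis.extend hs)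
  -- in the coordinates given by a basis extending the `w k`, the forms `v k` are variables
  let g : κ → hs.extend (Set.subset_univ _) := fun k =>
    ⟨w k, Module.Basis.subset_extend hs (Set.mem_range_self k)⟩
  have hrange : Set.range v = Φ '' (X '' Set.range g) := by
    rw [← Set.range_comp, ← Set.range_comp]
    congr 1
    ext k
    simp [g, hΦ, Module.Basis.extend_apply_self, hw]
  rw [hrange, ← Ideal.map_span]
  have := isPrime_span_X_image (R := K) (Set.range g)
  exact Ideal.map_isPrime_of_equiv _

end LinearForms

theorem isPrimeGrid_of_linearIndependent {K : Type*} [Field K] {σ : Type*} [Fintype σ]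
    {ι : Type*} [Fintype ι] {κ : ι → Type*} {L : (j : ι) → κ j → MvPolynomial σ K}
    (hLhom : ∀ j i, (L j i).IsHomogeneous 1)
    (hα : ∀ c : (j : ι) → κ j, LinearIndependent K fun j => L j (c j))
    (hα' : ∀ c c' : (j : ι) → κ j, c ≠ c' →
      Submodule.span K (Set.range fun j => L j (c j)) ≠
        Submodule.span K (Set.range fun j => L j (c' j))) :
    IsPrimeGrid L where
  isPrime U c := by
    rw [selIdeal, Set.image_eq_range]
    exact isPrime_span_range_of_linearIndependent (fun _ => hLhom _ _)
      ((hα c).comp _ Subtype.val_injective)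
  selected_of_mem {U c m i} h := by
    classical
    have hspan : L m i ∈ Submodule.span K ((fun j => L j (c j)) '' U) :=
      mem_span_of_isHomogeneous_of_mem_ideal_span (by rintro _ ⟨j, -, rfl⟩; exact hLhom _ _)
        (hLhom m i) h
    by_cases hi : c m = i
    · subst hi
      exact ⟨by_contra fun hm => (hα c).notMem_span_image hm hspan, rfl⟩
    · -- the selection `update c m i` spans a subspace of the span of `c`, hence the same one
      refine absurd ?_
        (hα' (Function.update c m i) c fun h => hi (by rw [← h, Function.update_self]))
      have hle : Submodule.span K (Set.range fun j => L j (Function.update c m i j)) ≤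
          Submodule.span K (Set.range fun j => L j (c j)) := by
        refine Submodule.span_le.2 (Set.range_subset_iff.2 fun j => ?_)
        rcases eq_or_ne j m with rfl | hjm
        · rw [Function.update_self]
          exact Submodule.span_mono (Set.image_subset_range _ _) hspan
        · rw [Function.update_of_ne hjm]
          exact Submodule.subset_span (Set.mem_range_self j)
      have := FiniteDimensional.span_of_finite K (Set.finite_range fun j => L j (c j))
      exact Submodule.eq_of_le_of_finrank_eq hle
        (by rw [finrank_span_eq_card (hα _), finrank_span_eq_card (hα c)])

theorem pseudo_grid_primary_decomposition_and_radical_general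
    (K : Type) [Field K] (n : ℕ) (hn : 2 ≤ n)
    (ℓ : Fin n → ℕ) (hℓ : ∀ j, 0 < ℓ j)
    (L : (j : Fin n) → Fin (ℓ j) → MvPolynomial (Fin (n + 1)) K)
    (hLhom : ∀ j i, (L j i).IsHomogeneous 1)
    (hα : ∀ c : (j : Fin n) → Fin (ℓ j), LinearIndependent K (fun j => L j (c j)))
    (hα' : ∀ c c' : (j : Fin n) → Fin (ℓ j), c ≠ c' →
      Submodule.span K (Set.range fun j => L j (c j)) ≠
        Submodule.span K (Set.range fun j => L j (c' j)))
    (f : Fin n → MvPolynomial (Fin (n + 1)) K)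
    (hf : ∀ j, f j = ∏ i : Fin (ℓ j), L j i) :
    (Ideal.span {g : MvPolynomial (Fin (n + 1)) K | ∃ i j : Fin n, i < j ∧ g = f i * f j} =
      ⨅ (k : Fin n) (c : (j : Fin n) → Fin (ℓ j)),
        Ideal.span {g : MvPolynomial (Fin (n + 1)) K | ∃ j : Fin n, j ≠ k ∧ g = L j (c j)}) ∧
    (∀ (k : Fin n) (c : (j : Fin n) → Fin (ℓ j)),
      (Ideal.span {g : MvPolynomial (Fin (n + 1)) K |
        ∃ j : Fin n, j ≠ k ∧ g = L j (c j)}).IsPrime) ∧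
    (Ideal.span {g : MvPolynomial (Fin (n + 1)) K |
      ∃ i j : Fin n, i < j ∧ g = f i * f j}).IsRadical := by
  obtain rfl : f = familyProd L := _root_.funext hf
  have : Nonempty (Fin n) := ⟨⟨0, by omega⟩⟩
  have : ∀ j, Nonempty (Fin (ℓ j)) := fun j => ⟨⟨0, hℓ j⟩⟩
  have hL := isPrimeGrid_of_linearIndependent hLhom hα hα'
  have hsel : ∀ (k : Fin n) (c : (j : Fin n) → Fin (ℓ j)),
      Ideal.span {g | ∃ j, j ≠ k ∧ g = L j (c j)} = selIdeal L {k}ᶜ c := by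
    intro k c
    simp only [selIdeal, Set.image, Set.mem_compl_singleton_iff, eq_comm]
  have hI := hL.span_pairs_eq_iInf_selIdeal
  simp only [hsel]
  refine ⟨hI, fun k c => hL.isPrime _ c, ?_⟩
  rw [hI]
  exact Ideal.isRadical_iInf _ fun k => Ideal.isRadical_iInf _ fun c => (hL.isPrime _ c).isRadical

/-- For linear forms `L j i` in `R = K[x_0,…,x_n]` satisfying condition (α')
(every selection is linearly independent, and the spanned `n`-dimensional subspaces are
pairwise distinct for distinct selections), with `f j = ∏ i, L j i` and
`I = (f_i f_j : i < j)`, the ideal `I` is the intersection over `k` and over selections of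
the ideals generated by `{L j (c j) : j ≠ k}`; each of these ideals is prime, and in
particular `I` is a radical ideal. -/
theorem pseudo_grid_primary_decomposition_and_radical
    (K : Type) [Field K] [Infinite K] (n : ℕ) (hn : 2 ≤ n)
    (ℓ : Fin n → ℕ) (hℓ : ∀ j, 0 < ℓ j)
    (L : (j : Fin n) → Fin (ℓ j) → MvPolynomial (Fin (n + 1)) K)
    (hLhom : ∀ j i, (L j i).IsHomogeneous 1)
    (hα : ∀ c : (j : Fin n) → Fin (ℓ j), LinearIndependent K (fun j => L j (c j)))
    (hα' : ∀ c c' : (j : Fin n) → Fin (ℓ j), c ≠ c' →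
      Submodule.span K (Set.range fun j => L j (c j)) ≠
        Submodule.span K (Set.range fun j => L j (c' j)))
    (f : Fin n → MvPolynomial (Fin (n + 1)) K)
    (hf : ∀ j, f j = ∏ i : Fin (ℓ j), L j i) :
    (Ideal.span {g : MvPolynomial (Fin (n + 1)) K | ∃ i j : Fin n, i < j ∧ g = f i * f j} =
      ⨅ (k : Fin n) (c : (j : Fin n) → Fin (ℓ j)),
        Ideal.span {g : MvPolynomial (Fin (n + 1)) K | ∃ j : Fin n, j ≠ k ∧ g = L j (c j)}) ∧
    (∀ (k : Fin n) (c : (j : Fin n) → Fin (ℓ j)),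
      (Ideal.span {g : MvPolynomial (Fin (n + 1)) K |
        ∃ j : Fin n, j ≠ k ∧ g = L j (c j)}).IsPrime) ∧
    (Ideal.span {g : MvPolynomial (Fin (n + 1)) K |
      ∃ i j : Fin n, i < j ∧ g = f i * f j}).IsRadical :=
  pseudo_grid_primary_decomposition_and_radical_general K n hn ℓ hℓ L hLhom hα hα' f hf
end

section
/- Let S = K[x_1, …, x_n] with n ≥ 2, let ℓ_1, …, ℓ_n and m be positive integers, and let Γ = ⋂_{k=1}^n (x_1^{ℓ_1}, …, x_{k−1}^{ℓ_{k−1}}, x_{k+1}^{ℓ_{k+1}}, …, x_n^{ℓ_n})^m. Then Γ is generated by the set B_Γ = ⋃_{t=1}^m { x_1^{ℓ_1 b_1} ⋯ x_n^{ℓ_n b_n} : b_1, …, b_n ≥ 0, Σ_i b_i = m + t, b_i ≤ t for all i, and there exist 1 ≤ u < v ≤ n with b_u = b_v = t }, and B_Γ is a minimal generating set of Γ (no proper subset of B_Γ generates Γ). In particular, Γ = Φ(Γ̄)S where Γ̄ = ⋂_{k=1}^n (y_1, …, y_{k−1}, y_{k+1}, …, y_n)^m ⊆ P. -/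
/-!
Both `Γ` and the ideal generated by `B_Γ` are monomial ideals, so it suffices to compare the
monomials `x^a` they contain. With `β_i = ⌊a_i / ℓ_i⌋`, the monomial `x^a` lies in `Γ` iff
`m + β_k ≤ ∑ β` for every `k`, and in `(B_Γ)` iff `β` dominates a grid exponent. A vector `β`
satisfying these covering inequalities that cannot be lowered in any coordinate has all entries
`≤ t := ∑ β - m` and at least two entries equal to `t`, so it is a grid exponent; lowering
coordinates one at a time reaches such a vector. Grid exponents of a fixed `m` form an
antichain, which gives minimality, and `Φ` maps the generators of `Γ̄` (the case `ℓ = 1`) onto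
those of `Γ`.
-/

open MvPolynomial Finset

/-- The set `B_Γ = ⋃_{t=1}^m { x_1^{ℓ_1 b_1} ⋯ x_n^{ℓ_n b_n} : Σ b_i = m + t, b_i ≤ t,
and b_u = b_v = t for some u < v }`. -/
def BGamma (K : Type) [Field K] (n m : ℕ) (ℓ : Fin n → ℕ) : Set (MvPolynomial (Fin n) K) :=
  {g | ∃ t : ℕ, 1 ≤ t ∧ t ≤ m ∧ ∃ b : Fin n → ℕ,
    (∑ i, b i) = m + t ∧ (∀ i, b i ≤ t) ∧
    (∃ u v : Fin n, u < v ∧ b u = t ∧ b v = t) ∧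
    g = ∏ i, X i ^ (ℓ i * b i)}

section GridExponent

variable {ι : Type*} [Fintype ι] {m : ℕ}

def IsCovering (m : ℕ) (β : ι → ℕ) : Prop :=
  ∀ k, m + β k ≤ ∑ j, β j

def IsGridExponent (m : ℕ) (b : ι → ℕ) : Prop :=
  ∃ t, 1 ≤ t ∧ t ≤ m ∧ ∑ i, b i = m + t ∧ (∀ i, b i ≤ t) ∧ ∃ u v, u ≠ v ∧ b u = t ∧ b v = t

lemma IsGridExponent.isCovering {b : ι → ℕ} (hb : IsGridExponent m b) : IsCovering m b := by
  obtain ⟨t, -, -, hsum, hle, -⟩ := hb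
  intro k
  have := hle k
  omega

lemma IsGridExponent.eq_of_le {b b' : ι → ℕ} (hb : IsGridExponent m b)
    (hb' : IsGridExponent m b') (h : b' ≤ b) : b' = b := by
  classical
  obtain ⟨t, -, -, hsum, -, u, v, huv, hu, hv⟩ := hb
  obtain ⟨t', -, -, hsum', hle', -⟩ := hb'
  have hdiff : ∑ i, (b i - b' i) = ∑ i, b i - ∑ i, b' i :=
    sum_tsub_distrib _ fun i _ => h i
  have hpair : (b u - b' u) + (b v - b' v) ≤ ∑ i, (b i - b' i) := by
    rw [← sum_pair (f := fun i => b i - b' i) huv]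
    exact sum_le_sum_of_subset (subset_univ _)
  have hsum_le : ∑ i, b' i ≤ ∑ i, b i := sum_le_sum fun i _ => h i
  have hu' := hle' u
  have hv' := hle' v
  have hsums : ∑ i, b' i = ∑ i, b i := by omega
  funext i
  exact (sum_eq_sum_iff_of_le fun i _ => h i).mp hsums i (mem_univ i)

lemma isGridExponent_of_tight [Nonempty ι] {β : ι → ℕ} (hm : 0 < m)
    (hcover : IsCovering m β)
    (htight : ∀ i, 0 < β i → ∃ k ≠ i, m + β k = ∑ j, β j) :
    IsGridExponent m β := by
  classical
  obtain ⟨i, -, hi⟩ : ∃ i ∈ univ, β i ≠ 0 :=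
    exists_ne_zero_of_sum_ne_zero (by have := hcover (Classical.arbitrary ι); omega)
  obtain ⟨u, hui, hu⟩ := htight i (Nat.pos_of_ne_zero hi)
  have hui' := hcover i
  obtain ⟨v, hvu, hv⟩ := htight u (by omega)
  have hpair : β u + β v ≤ ∑ j, β j := by
    rw [← sum_pair (f := β) hvu.symm]
    exact sum_le_sum_of_subset (subset_univ _)
  refine ⟨∑ j, β j - m, by omega, by omega, by omega, fun j => ?_, u, v, hvu.symm, by omega,
    by omega⟩
  have := hcover j
  omega

lemma exists_add_eq_sum_of_not_isCovering_sub_single [DecidableEq ι] {β : ι → ℕ} {i : ι}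
    (hcover : IsCovering m β) (hi : 0 < β i) (hlower : ¬ IsCovering m (β - Pi.single i 1)) :
    ∃ k ≠ i, m + β k = ∑ j, β j := by
  have hle : Pi.single i 1 ≤ β := fun j => by
    by_cases hj : j = i
    · subst hj; simpa [Nat.one_le_iff_ne_zero, Nat.pos_iff_ne_zero] using hi
    · simp [hj]
  have hsum : ∑ j, (β - Pi.single i 1 : ι → ℕ) j + 1 = ∑ j, β j :=
    calc ∑ j, (β - Pi.single i 1 : ι → ℕ) j + 1
        = ∑ j, ((β - Pi.single i 1 : ι → ℕ) j + (Pi.single i 1 : ι → ℕ) j) := by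
          simp [sum_add_distrib]
      _ = ∑ j, β j := sum_congr rfl fun j _ => tsub_add_cancel_of_le (hle j)
  simp only [IsCovering, not_forall, not_le] at hlower
  obtain ⟨k, hk⟩ := hlower
  have hcov := hcover k
  by_cases hki : k = i
  · subst hki
    rw [Pi.sub_apply, Pi.single_eq_same] at hk
    omega
  · rw [Pi.sub_apply, Pi.single_eq_of_ne hki, tsub_zero] at hk
    exact ⟨k, hki, by omega⟩

lemma exists_isGridExponent_le [Nonempty ι] (hm : 0 < m) (β : ι → ℕ)
    (hcover : IsCovering m β) : ∃ b, IsGridExponent m b ∧ b ≤ β := by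
  classical
  induction hs : ∑ j, β j using Nat.strong_induction_on generalizing β with
  | _ s ih =>
    by_cases hlower : ∃ i, 0 < β i ∧ IsCovering m (β - Pi.single i 1)
    · obtain ⟨i, hi, hcover'⟩ := hlower
      have hlt : ∑ j, (β - Pi.single i 1 : ι → ℕ) j < s := by
        rw [← hs]
        refine sum_lt_sum (fun j _ => tsub_le_self) ⟨i, mem_univ i, ?_⟩
        simp only [Pi.sub_apply, Pi.single_eq_same]
        omega
      obtain ⟨b, hgrid, hb⟩ := ih _ hlt _ hcover' rfl
      exact ⟨b, hgrid, hb.trans fun j => tsub_le_self⟩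
    · push Not at hlower
      exact ⟨β, isGridExponent_of_tight hm hcover fun i hi =>
        exists_add_eq_sum_of_not_isCovering_sub_single hcover hi (hlower i hi), le_rfl⟩

lemma exists_isGridExponent_le_iff [Nonempty ι] (hm : 0 < m) (β : ι → ℕ) :
    (∃ b, IsGridExponent m b ∧ b ≤ β) ↔ IsCovering m β := by
  refine ⟨fun ⟨b, hb, hbβ⟩ k => ?_, exists_isGridExponent_le hm β⟩
  have hsplit : ∑ j, β j = ∑ j, b j + ∑ j, (β j - b j) := by
    rw [← sum_add_distrib]
    exact sum_congr rfl fun j _ => (add_tsub_cancel_of_le (hbβ j)).symm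
  have hk : β k - b k ≤ ∑ j, (β j - b j) :=
    single_le_sum (f := fun j => β j - b j) (fun j _ => Nat.zero_le _) (mem_univ k)
  have := hb.isCovering k
  omega

end GridExponent


section MonomialIdeal

variable {σ R : Type*} [CommSemiring R]

lemma mem_ideal_span_monomial_image_of_isUpperSet {D : Set (σ →₀ ℕ)} (hD : IsUpperSet D)
    {p : MvPolynomial σ R} :
    p ∈ Ideal.span ((fun d => monomial d (1 : R)) '' D) ↔ ∀ a ∈ p.support, a ∈ D := by
  rw [mem_ideal_span_monomial_image]
  exact forall₂_congr fun a _ => ⟨fun ⟨d, hd, hda⟩ => hD hda hd, fun ha => ⟨a, ha, le_rfl⟩⟩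

lemma ideal_span_ne_of_ssubset_monomial_image [Nontrivial R] {A : Set (σ →₀ ℕ)}
    (hA : IsAntichain (· ≤ ·) A) {B : Set (MvPolynomial σ R)}
    (hB : B ⊂ (fun d => monomial d (1 : R)) '' A) :
    Ideal.span B ≠ Ideal.span ((fun d => monomial d (1 : R)) '' A) := by
  classical
  intro hspan
  obtain ⟨_, ⟨e, he, rfl⟩, heB⟩ := Set.exists_of_ssubset hB
  have hBsub : B ⊆ (fun d => monomial d (1 : R)) '' (A \ {e}) := by
    intro g hg
    obtain ⟨a, ha, rfl⟩ := hB.subset hg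
    exact ⟨a, ⟨ha, by rintro rfl; exact heB hg⟩, rfl⟩
  have hmem : monomial e (1 : R) ∈ Ideal.span B := hspan ▸ Ideal.subset_span ⟨e, he, rfl⟩
  obtain ⟨a, ⟨ha, hae⟩, hle⟩ :=
    mem_ideal_span_monomial_image.mp (Ideal.span_mono hBsub hmem) e
      (by rw [mem_support_iff, coeff_monomial, if_pos rfl]; exact one_ne_zero)
  exact hA ha he hae hle

lemma isUpperSet_le_sum_div (ℓ : σ → ℕ) (s : Finset σ) (m : ℕ) :
    IsUpperSet {a : σ →₀ ℕ | m ≤ ∑ j ∈ s, a j / ℓ j} := fun _ _ haa' ha =>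
  ha.trans (sum_le_sum fun j _ => Nat.div_le_div_right (haa' j))

lemma ideal_span_X_pow_image_pow {ℓ : σ → ℕ} (hℓ : ∀ j, 0 < ℓ j) (s : Finset σ) (m : ℕ) :
    Ideal.span ((fun j => (X j : MvPolynomial σ R) ^ ℓ j) '' s) ^ m
      = Ideal.span ((fun d => monomial d (1 : R)) '' {a | m ≤ ∑ j ∈ s, a j / ℓ j}) := by
  classical
  refine le_antisymm ?_ (Ideal.span_le.mpr ?_)
  · induction m with
    | zero =>
      rw [pow_zero, Ideal.one_eq_top, top_le_iff, Ideal.eq_top_iff_one, one_def]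
      exact Ideal.subset_span ⟨0, Nat.zero_le _, rfl⟩
    | succ m ih =>
      refine (Ideal.mul_mono_left ih).trans ?_
      rw [Ideal.span_mul_span', Ideal.span_le]
      rintro _ ⟨_, ⟨a, ha, rfl⟩, _, ⟨j, hj, rfl⟩, rfl⟩
      refine Ideal.subset_span ⟨a + Finsupp.single j (ℓ j), ?_,
        by simp only [X_pow_eq_monomial, monomial_mul, one_mul]⟩
      have hdiv : ∀ i, (a + Finsupp.single j (ℓ j)) i / ℓ i
          = a i / ℓ i + (Pi.single j 1 : σ → ℕ) i := by
        intro i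
        by_cases hij : i = j
        · subst hij
          simp [Nat.add_div_right _ (hℓ i)]
        · simp [hij]
      simp only [Set.mem_ofPred_eq, hdiv, sum_add_distrib, sum_pi_single', if_pos (mem_coe.mp hj)]
      exact Nat.add_le_add_right ha 1
  · rintro _ ⟨a, ha, rfl⟩
    have hgen : ∏ j ∈ s, (X j ^ ℓ j) ^ (a j / ℓ j) ∈
        Ideal.span ((fun j => (X j : MvPolynomial σ R) ^ ℓ j) '' s) ^ m := by
      refine Ideal.pow_le_pow_right ha ?_
      rw [← prod_pow_eq_pow_sum]
      exact Ideal.prod_mem_prod fun j hj =>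
        Ideal.pow_mem_pow (Ideal.subset_span (Set.mem_image_of_mem _ hj)) _
    refine Ideal.mem_of_dvd _ ?_ hgen
    simp_rw [← pow_mul, X_pow_eq_monomial, ← monomial_sum_one, monomial_dvd_monomial, one_dvd,
      and_true]
    refine Or.inr fun i => ?_
    rw [Finsupp.finsetSum_apply]
    simp only [Finsupp.single_apply, sum_ite_eq', ← mem_coe]
    split_ifs
    · exact Nat.mul_div_le _ _
    · exact Nat.zero_le _

end MonomialIdeal

section FiniteVariables

variable {σ R : Type*} [CommSemiring R] [Fintype σ]

lemma prod_X_pow_eq_monomial_equivFunOnFinite (e : σ → ℕ) :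
    ∏ i, (X i : MvPolynomial σ R) ^ e i = monomial (Finsupp.equivFunOnFinite.symm e) 1 := by
  rw [monomial_eq, C_1, one_mul, Finsupp.prod_fintype] <;> simp

lemma equivFunOnFinite_symm_mul_le_iff {ℓ : σ → ℕ} (hℓ : ∀ j, 0 < ℓ j) {b : σ → ℕ}
    {a : σ →₀ ℕ} : Finsupp.equivFunOnFinite.symm (ℓ * b) ≤ a ↔ b ≤ fun i => a i / ℓ i := by
  simp only [Finsupp.le_def, Pi.le_def, Finsupp.coe_equivFunOnFinite_symm, Pi.mul_apply,
    Nat.le_div_iff_mul_le (hℓ _), mul_comm]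

lemma isAntichain_image_isGridExponent {ℓ : σ → ℕ} (hℓ : ∀ j, 0 < ℓ j) (m : ℕ) :
    IsAntichain (· ≤ ·)
      ((fun b => Finsupp.equivFunOnFinite.symm (ℓ * b)) '' {b | IsGridExponent m b}) := by
  rintro _ ⟨b, hb, rfl⟩ _ ⟨b', hb', rfl⟩ hne hle
  have hbb' : b = b' := hb'.eq_of_le hb fun i => Nat.le_of_mul_le_mul_left (hle i) (hℓ i)
  exact hne (hbb' ▸ rfl)

variable [DecidableEq σ]

lemma mem_iInf_ideal_span_X_pow_pow_iff {ℓ : σ → ℕ} (hℓ : ∀ j, 0 < ℓ j) (m : ℕ)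
    {p : MvPolynomial σ R} :
    p ∈ ⨅ k : σ, Ideal.span ((fun j => (X j : MvPolynomial σ R) ^ ℓ j) '' {j | j ≠ k}) ^ m
      ↔ ∀ a ∈ p.support, IsCovering m fun i => a i / ℓ i := by
  have hset : ∀ k : σ, {j | j ≠ k} = ((univ.erase k : Finset σ) : Set σ) := fun k => by
    ext; simp
  simp_rw [hset, Ideal.mem_iInf, ideal_span_X_pow_image_pow hℓ]
  simp only [mem_ideal_span_monomial_image_of_isUpperSet (isUpperSet_le_sum_div ℓ _ m),
    Set.mem_ofPred_eq]
  have hsplit : ∀ (a : σ →₀ ℕ) k, ∑ j, a j / ℓ j = ∑ j ∈ univ.erase k, a j / ℓ j + a k / ℓ k :=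
    fun a k => (sum_erase_add univ _ (mem_univ k)).symm
  refine ⟨fun h a ha k => ?_, fun h k a ha => ?_⟩
  · have := h k a ha
    have := hsplit a k
    dsimp only
    omega
  · have : m + a k / ℓ k ≤ ∑ j, a j / ℓ j := h a ha k
    have := hsplit a k
    omega

end FiniteVariables

section FatGrid

variable {K : Type} [Field K] {n : ℕ}

lemma BGamma_eq_image (ℓ : Fin n → ℕ) (m : ℕ) :
    BGamma K n m ℓ = (fun b => ∏ i, (X i : MvPolynomial (Fin n) K) ^ (ℓ i * b i)) ''
      {b | IsGridExponent m b} := by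
  ext g
  constructor
  · rintro ⟨t, ht, htm, b, hsum, hle, ⟨u, v, huv, hu, hv⟩, rfl⟩
    exact ⟨b, ⟨t, ht, htm, hsum, hle, u, v, huv.ne, hu, hv⟩, rfl⟩
  · rintro ⟨b, ⟨t, ht, htm, hsum, hle, u, v, huv, hu, hv⟩, rfl⟩
    refine ⟨t, ht, htm, b, hsum, hle, ?_, rfl⟩
    rcases huv.lt_or_gt with h | h
    exacts [⟨u, v, h, hu, hv⟩, ⟨v, u, h, hv, hu⟩]

lemma BGamma_eq_monomial_image (ℓ : Fin n → ℕ) (m : ℕ) :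
    BGamma K n m ℓ = (fun d => monomial d (1 : K)) ''
      ((fun b => Finsupp.equivFunOnFinite.symm (ℓ * b)) '' {b | IsGridExponent m b}) := by
  rw [BGamma_eq_image, Set.image_image]
  exact Set.image_congr fun b _ => prod_X_pow_eq_monomial_equivFunOnFinite _

lemma iInf_ideal_span_X_pow_pow_eq_span_BGamma [NeZero n] {ℓ : Fin n → ℕ} (hℓ : ∀ j, 0 < ℓ j)
    {m : ℕ} (hm : 0 < m) :
    ⨅ k : Fin n, Ideal.span ((fun j => (X j : MvPolynomial (Fin n) K) ^ ℓ j) '' {j | j ≠ k}) ^ m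
      = Ideal.span (BGamma K n m ℓ) := by
  ext p
  rw [mem_iInf_ideal_span_X_pow_pow_iff hℓ, BGamma_eq_monomial_image,
    mem_ideal_span_monomial_image]
  refine forall₂_congr fun a _ => ?_
  simp only [Set.exists_mem_image, Set.mem_ofPred_eq, equivFunOnFinite_symm_mul_le_iff hℓ,
    exists_isGridExponent_le_iff hm]

lemma aeval_X_pow_image_BGamma (ℓ : Fin n → ℕ) (m : ℕ) :
    aeval (fun i => (X i : MvPolynomial (Fin n) K) ^ ℓ i) '' BGamma K n m (fun _ => 1)
      = BGamma K n m ℓ := by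
  rw [BGamma_eq_image, BGamma_eq_image, Set.image_image]
  refine Set.image_congr fun b _ => ?_
  simp [map_prod, ← pow_mul, mul_comm]

end FatGrid

theorem fat_grid_monomial_ideal_minimal_generators_general
    (K : Type) [Field K] (n : ℕ) (hn : 2 ≤ n)
    (ℓ : Fin n → ℕ) (hℓ : ∀ j, 0 < ℓ j) (m : ℕ) (hm : 0 < m) :
    (⨅ k : Fin n,
        (Ideal.span ((fun j : Fin n => (X j : MvPolynomial (Fin n) K) ^ ℓ j) ''
          {j | j ≠ k})) ^ m) =
      Ideal.span (BGamma K n m ℓ) ∧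
    (∀ B ⊂ BGamma K n m ℓ,
      Ideal.span B ≠
        (⨅ k : Fin n,
          (Ideal.span ((fun j : Fin n => (X j : MvPolynomial (Fin n) K) ^ ℓ j) ''
            {j | j ≠ k})) ^ m)) ∧
    (⨅ k : Fin n,
        (Ideal.span ((fun j : Fin n => (X j : MvPolynomial (Fin n) K) ^ ℓ j) ''
          {j | j ≠ k})) ^ m) =
      Ideal.map
        (aeval (fun i : Fin n => (X i : MvPolynomial (Fin n) K) ^ ℓ i) :
          MvPolynomial (Fin n) K →ₐ[K] MvPolynomial (Fin n) K)
        (⨅ k : Fin n,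
          (Ideal.span ((fun j : Fin n => (X j : MvPolynomial (Fin n) K)) '' {j | j ≠ k})) ^ m) := by
  have : NeZero n := ⟨by omega⟩
  have hΓ := iInf_ideal_span_X_pow_pow_eq_span_BGamma (K := K) hℓ hm
  have hΓbar : ⨅ k : Fin n,
      Ideal.span ((fun j : Fin n => (X j : MvPolynomial (Fin n) K)) '' {j | j ≠ k}) ^ m
        = Ideal.span (BGamma K n m fun _ => 1) := by
    simpa only [pow_one] using
      iInf_ideal_span_X_pow_pow_eq_span_BGamma (K := K) (ℓ := fun _ => 1) (fun _ => one_pos) hm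
  refine ⟨hΓ, fun B hB => ?_, ?_⟩
  · rw [BGamma_eq_monomial_image] at hB
    rw [hΓ, BGamma_eq_monomial_image]
    exact ideal_span_ne_of_ssubset_monomial_image (isAntichain_image_isGridExponent hℓ m) hB
  · rw [hΓ, hΓbar, Ideal.map_span, aeval_X_pow_image_BGamma]

/-- Let `Γ = ⋂_{k=1}^n (x_1^{ℓ_1},…,x̂_k^{ℓ_k},…,x_n^{ℓ_n})^m ⊆ S`.
Then `Γ` is generated by `B_Γ`, `B_Γ` is a minimal generating set (no proper subset
generates `Γ`), and `Γ = Φ(Γ̄)S` where `Γ̄ = ⋂_{k=1}^n (y_1,…,ŷ_k,…,y_n)^m` and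
`Φ(y_i) = x_i^{ℓ_i}`. -/
theorem fat_grid_monomial_ideal_minimal_generators
    (K : Type) [Field K] [Infinite K] (n : ℕ) (hn : 2 ≤ n)
    (ℓ : Fin n → ℕ) (hℓ : ∀ j, 0 < ℓ j) (m : ℕ) (hm : 0 < m) :
    (⨅ k : Fin n,
        (Ideal.span ((fun j : Fin n => (X j : MvPolynomial (Fin n) K) ^ ℓ j) ''
          {j | j ≠ k})) ^ m) =
      Ideal.span (BGamma K n m ℓ) ∧
    (∀ B ⊂ BGamma K n m ℓ,
      Ideal.span B ≠
        (⨅ k : Fin n,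
          (Ideal.span ((fun j : Fin n => (X j : MvPolynomial (Fin n) K) ^ ℓ j) ''
            {j | j ≠ k})) ^ m)) ∧
    (⨅ k : Fin n,
        (Ideal.span ((fun j : Fin n => (X j : MvPolynomial (Fin n) K) ^ ℓ j) ''
          {j | j ≠ k})) ^ m) =
      Ideal.map
        (aeval (fun i : Fin n => (X i : MvPolynomial (Fin n) K) ^ ℓ i) :
          MvPolynomial (Fin n) K →ₐ[K] MvPolynomial (Fin n) K)
        (⨅ k : Fin n,
          (Ideal.span ((fun j : Fin n => (X j : MvPolynomial (Fin n) K)) '' {j | j ≠ k})) ^ m) :=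
  fat_grid_monomial_ideal_minimal_generators_general K n hn ℓ hℓ m hm
end

section
/- Let S = K[x_1, …, x_n] with n ≥ 2, let ℓ_1, …, ℓ_n and m be positive integers, and let Ω = ⋂_{k=1}^n (x_1^{ℓ_1}, …, x_{k−1}^{ℓ_{k−1}}, x_{k+1}^{ℓ_{k+1}}, …, x_n^{ℓ_n}) and Γ = ⋂_{k=1}^n (x_1^{ℓ_1}, …, x_{k−1}^{ℓ_{k−1}}, x_{k+1}^{ℓ_{k+1}}, …, x_n^{ℓ_n})^m. Then Γ equals the m-th symbolic power Ω^(m) of Ω. -/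
/-!
Each `Q_k = (x_j^{ℓ_j} : j ≠ k)` has radical `P_k = (x_j : j ≠ k)`, and `x_k ∈ P_j \ P_k` for
`j ≠ k`, so the radicals are pairwise incomparable. Splitting off the variable `x_k` identifies
`S` with `R[x_k]`, `R = K[x_j : j ≠ k]`, and `Q_k^m` with the extension of an ideal of `R` whose
radical is the maximal ideal of variables; that ideal is primary, and by McCoy's theorem
primary ideals stay primary in a polynomial extension. Hence `Ω = ⋂ Q_k` is a minimal primary
decomposition, `Ass(S/Ω) = {P_k}`, and localizing at `P_k` turns every `Q_j` with `j ≠ k`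
into the unit ideal, so `Ω^m S_{P_k} ∩ S = Q_k^m S_{P_k} ∩ S = Q_k^m`.
-/

open MvPolynomial

/-- The `m`-th symbolic power of an ideal `N` of a commutative ring `T`:
`N^(m) = ⋂_{𝔭 ∈ Ass(T/N)} φ_𝔭⁻¹(N^m T_𝔭)`. -/
noncomputable def symbolicPower {T : Type} [CommRing T] (N : Ideal T) (m : ℕ) : Ideal T :=
  ⨅ (p : Ideal T) (h : p.IsPrime ∧ ∃ x : T ⧸ N, p = (Submodule.span T {x}).annihilator),
    haveI : p.IsPrime := h.1
    (Ideal.map (algebraMap T (Localization.AtPrime p)) (N ^ m)).comap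
      (algebraMap T (Localization.AtPrime p))

theorem Ideal.IsPrimary.map_C {R : Type*} [CommRing R] {I : Ideal R} (hI : I.IsPrimary) :
    (I.map (Polynomial.C : R →+* Polynomial R)).IsPrimary := by
  have hker : RingHom.ker (Polynomial.mapRingHom (Ideal.Quotient.mk I)) = I.map Polynomial.C := by
    rw [Polynomial.ker_mapRingHom, Ideal.mk_ker]
  refine Ideal.isPrimary_iff.mpr ⟨fun htop => hI.ne_top ?_, fun {f g} hfg => ?_⟩
  · rw [Ideal.eq_top_iff_one] at htop ⊢
    simpa using Ideal.mem_map_C_iff.mp htop 0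
  rw [or_iff_not_imp_left]
  intro hf
  rw [← hker, RingHom.mem_ker, map_mul] at hfg
  rw [← hker, RingHom.mem_ker] at hf
  obtain ⟨a, ha, hag⟩ := Polynomial.notMem_nonZeroDivisors_iff.mp
    fun hg => hf (mem_nonZeroDivisors_iff_right.mp hg _ hfg)
  obtain ⟨r, rfl⟩ := Ideal.Quotient.mk_surjective a
  have hcoeff (i : ℕ) : IsNilpotent ((g.map (Ideal.Quotient.mk I)).coeff i) := by
    have hri : r * g.coeff i ∈ I := by
      simpa [← map_mul, Ideal.Quotient.eq_zero_iff_mem] using congr(Polynomial.coeff $hag i)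
    obtain ⟨N, hN⟩ := ((Ideal.isPrimary_iff.mp hI).2 hri).resolve_left
      (by simpa [Ideal.Quotient.eq_zero_iff_mem] using ha)
    exact ⟨N, by rw [Polynomial.coeff_map, ← map_pow, Ideal.Quotient.eq_zero_iff_mem]; exact hN⟩
  obtain ⟨N, hN⟩ := Polynomial.isNilpotent_iff.mpr hcoeff
  exact ⟨N, by rw [← hker, RingHom.mem_ker, map_pow]; exact hN⟩

theorem Submodule.annihilator_span_mkQ {R M : Type*} [CommRing R] [AddCommGroup M] [Module R M]
    (N : Submodule R M) (x : M) : (span R {N.mkQ x}).annihilator = N.colon {x} := by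
  ext r
  rw [mem_annihilator_span_singleton, mem_colon_singleton, ← map_smul, mkQ_apply,
    Quotient.mk_eq_zero]

theorem Ideal.isAssociatedPrime_iff_eq_annihilator {R : Type*} [CommRing R] [IsNoetherianRing R]
    {N p : Ideal R} :
    N.IsAssociatedPrime p ↔ p.IsPrime ∧ ∃ x : R ⧸ N, p = (Submodule.span R {x}).annihilator := by
  rw [Submodule.isAssociatedPrime_iff, (Submodule.mkQ_surjective N).exists]
  simp only [Submodule.annihilator_span_mkQ]

open Finset in
theorem Ideal.associatedPrimes_iInf_of_isPrimary {R ι : Type*} [CommRing R] [Fintype ι]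
    {Q : ι → Ideal R} (hQ : ∀ i, (Q i).IsPrimary)
    (hrad : Pairwise fun i j => ¬ (Q i).radical ≤ (Q j).radical) :
    (⨅ i, Q i).associatedPrimes = Set.range fun i => (Q i).radical := by
  classical
  have hdec : Submodule.IsMinimalPrimaryDecomposition (⨅ i, Q i) (univ.image Q) := by
    refine ⟨by simp [inf_image, inf_univ_eq_iInf], by simp [hQ], ?_, ?_⟩
    · simp only [coe_image, coe_univ, Set.image_univ, Submodule.colon_univ]
      exact Pairwise.range_pairwise fun i j hij h => hrad hij h.le
    · simp only [mem_image, mem_univ, true_and, forall_exists_index, forall_apply_eq_imp_iff]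
      intro i hle
      obtain ⟨_, hj, hji⟩ := (isPrime_radical (hQ i)).inf_le'.mp (hle.trans le_radical)
      obtain ⟨hne, j, -, rfl⟩ := by simpa using hj
      exact hrad (fun h : j = i => hne (h ▸ rfl)) (radical_le_radical_iff.mpr hji)
  rw [← hdec.image_radical_eq_associated_primes]
  simp only [coe_image, coe_univ, Set.image_univ, Submodule.colon_univ, ← Set.range_comp]
  rfl

theorem IsLocalization.AtPrime.map_iInf_eq_of_not_le {R S ι : Type*} [CommRing R] [CommRing S]
    [Algebra R S] [Fintype ι] (p : Ideal R) [p.IsPrime] [IsLocalization.AtPrime S p]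
    {Q : ι → Ideal R} {i : ι} (h : ∀ j ≠ i, ¬ Q j ≤ p) :
    (⨅ j, Q j).map (algebraMap R S) = (Q i).map (algebraMap R S) := by
  classical
  rw [← Finset.inf_univ_eq_iInf, ← IsLocalization.mapFrameHom_apply p.primeCompl, map_finset_inf,
    Finset.inf_univ_eq_iInf]
  refine le_antisymm (iInf_le _ i) (le_iInf fun j => ?_)
  rcases eq_or_ne j i with rfl | hji
  · rfl
  · simp [IsLocalization.AtPrime.map_eq_top_of_not_le S (h j hji)]

theorem symbolicPower_iInf_eq_iInf_pow {R : Type} [CommRing R] [IsNoetherianRing R] {ι : Type*}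
    [Fintype ι] {Q : ι → Ideal R} {m : ℕ} (hQ : ∀ i, (Q i).IsPrimary)
    (hQm : ∀ i, (Q i ^ m).IsPrimary) (hrad : Pairwise fun i j => ¬ (Q i).radical ≤ (Q j).radical) :
    symbolicPower (⨅ i, Q i) m = ⨅ i, Q i ^ m := by
  have hass (p : Ideal R) :
      (p.IsPrime ∧ ∃ x : R ⧸ ⨅ i, Q i, p = (Submodule.span R {x}).annihilator) ↔
        ∃ i, (Q i).radical = p := by
    rw [← Ideal.isAssociatedPrime_iff_eq_annihilator, ← Submodule.AssociatePrimes.mem_iff,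
      Ideal.associatedPrimes_iInf_of_isPrimary hQ hrad, Set.mem_range]
  have hloc (i : ι) :
      haveI := Ideal.isPrime_radical (hQ i)
      ((⨅ j, Q j) ^ m).map (algebraMap R (Localization.AtPrime (Q i).radical)) |>.comap
        (algebraMap R (Localization.AtPrime (Q i).radical)) = Q i ^ m := by
    have := Ideal.isPrime_radical (hQ i)
    have hm : m ≠ 0 := by rintro rfl; exact (hQm i).ne_top (by simp)
    rw [Ideal.map_pow, IsLocalization.AtPrime.map_iInf_eq_of_not_le (Q i).radical fun j hji hle =>
      hrad hji (Ideal.radical_le_radical_iff.mpr hle), ← Ideal.map_pow]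
    refine IsLocalization.under_map_of_isPrimary_disjoint (Q i).radical.primeCompl _ (hQm i) ?_
    simp [Ideal.primeCompl, ← le_compl_iff_disjoint_left,
      (Ideal.pow_le_self hm).trans Ideal.le_radical]
  refine le_antisymm (le_iInf fun i => ?_) (le_iInf fun p => le_iInf fun hp => ?_)
  · exact (iInf₂_le (Q i).radical ((hass _).mpr ⟨i, rfl⟩)).trans (hloc i).le
  · obtain ⟨i, rfl⟩ := (hass p).mp hp
    exact (iInf_le _ i).trans (hloc i).ge

namespace MvPolynomial

variable {σ K : Type*} [Field K]

theorem isPrimary_of_forall_X_mem_radical {I : Ideal (MvPolynomial σ K)} (hI : I ≠ ⊤)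
    (hX : ∀ i, X i ∈ I.radical) : I.IsPrimary := by
  have hmax : (RingHom.ker (constantCoeff (σ := σ) (R := K))).IsMaximal :=
    RingHom.ker_isMaximal_of_surjective _ fun c => ⟨C c, constantCoeff_C _ _⟩
  have hle : RingHom.ker constantCoeff ≤ I.radical := by
    intro f hf
    have hf' : f ∈ Ideal.span ((X : σ → MvPolynomial σ K) '' Set.univ) := by
      refine mem_ideal_span_X_image.mpr fun d hd => ?_
      obtain ⟨i, hi⟩ := Finsupp.ne_iff.mp (show d ≠ 0 by
        rintro rfl
        exact (mem_support_iff.mp hd) (by simpa [constantCoeff_eq] using hf))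
      exact ⟨i, Set.mem_univ i, hi⟩
    rw [Set.image_univ] at hf'
    exact Ideal.span_le.mpr (Set.range_subset_iff.mpr hX) hf'
  exact Ideal.isPrimary_of_isMaximal_radical
    (hmax.eq_of_le (Ideal.radical_eq_top.not.mpr hI) hle ▸ hmax)

theorem isPrimary_span_range_X_pow_pow {ℓ : σ → ℕ} (hℓ : ∀ i, 0 < ℓ i) {m : ℕ} (hm : m ≠ 0) :
    (Ideal.span (Set.range fun i => (X i : MvPolynomial σ K) ^ ℓ i) ^ m).IsPrimary := by
  refine isPrimary_of_forall_X_mem_radical ?_ fun i =>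
    Ideal.mem_radical_of_pow_mem (m := ℓ i * m) (Ideal.le_radical ?_)
  · refine ne_top_of_le_ne_top (RingHom.ker_ne_top constantCoeff) ((Ideal.pow_le_self hm).trans ?_)
    rw [Ideal.span_le]
    rintro _ ⟨i, rfl⟩
    simp [constantCoeff_X, (hℓ i).ne']
  · rw [pow_mul]
    exact Ideal.pow_mem_pow (Ideal.subset_span (Set.mem_range_self i)) m

variable (K) in
noncomputable def equivPolynomialSubtypeNe [DecidableEq σ] (k : σ) :
    MvPolynomial σ K ≃ₐ[K] Polynomial (MvPolynomial {j // j ≠ k} K) :=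
  (renameEquiv K (Equiv.optionSubtypeNe k).symm).trans (optionEquivLeft K {j // j ≠ k})

theorem equivPolynomialSubtypeNe_X_of_ne [DecidableEq σ] {j k : σ} (hj : j ≠ k) :
    equivPolynomialSubtypeNe K k (X j) = Polynomial.C (X ⟨j, hj⟩) := by
  simp [equivPolynomialSubtypeNe, Equiv.optionSubtypeNe_symm_of_ne hj, optionEquivLeft_X_some]

variable (K) in
/-- The component `Q_k = (x_j^{ℓ_j} : j ≠ k)` of `Ω`. -/
noncomputable def powIdealExcept (ℓ : σ → ℕ) (k : σ) : Ideal (MvPolynomial σ K) :=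
  Ideal.span ((fun j => (X j : MvPolynomial σ K) ^ ℓ j) '' {j | j ≠ k})

theorem map_powIdealExcept [DecidableEq σ] (ℓ : σ → ℕ) (k : σ) :
    (powIdealExcept K ℓ k).map (equivPolynomialSubtypeNe K k) =
      (Ideal.span (Set.range fun j : {j // j ≠ k} => (X j : MvPolynomial _ K) ^ ℓ j)).map
        Polynomial.C := by
  rw [powIdealExcept, Ideal.map_span, Ideal.map_span, ← Set.range_comp, Set.image_image,
    Set.image_eq_range]
  congr 2
  funext ⟨j, hj⟩
  simp [equivPolynomialSubtypeNe_X_of_ne hj]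

theorem powIdealExcept_pow_isPrimary {ℓ : σ → ℕ} (hℓ : ∀ j, 0 < ℓ j) {m : ℕ} (hm : m ≠ 0)
    (k : σ) : (powIdealExcept K ℓ k ^ m).IsPrimary := by
  classical
  have hcomap : powIdealExcept K ℓ k ^ m =
      ((Ideal.span (Set.range fun j : {j // j ≠ k} => (X j : MvPolynomial _ K) ^ ℓ j) ^ m).map
        Polynomial.C).comap (equivPolynomialSubtypeNe K k) := by
    rw [Ideal.map_pow, ← map_powIdealExcept, ← Ideal.map_pow,
      Ideal.comap_map_of_bijective _ (equivPolynomialSubtypeNe K k).bijective]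
  rw [hcomap]
  exact ((isPrimary_span_range_X_pow_pow (σ := {j // j ≠ k}) (K := K) (fun j => hℓ j) hm).map_C).comap
    (equivPolynomialSubtypeNe K k : MvPolynomial σ K →+* _)

theorem X_mem_radical_powIdealExcept (ℓ : σ → ℕ) {j k : σ} (hjk : j ≠ k) :
    X j ∈ (powIdealExcept K ℓ k).radical :=
  Ideal.mem_radical_of_pow_mem (m := ℓ j) (Ideal.le_radical (Ideal.subset_span ⟨j, hjk, rfl⟩))

theorem X_notMem_radical_powIdealExcept {ℓ : σ → ℕ} (hℓ : ∀ j, 0 < ℓ j) (k : σ) :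
    X k ∉ (powIdealExcept K ℓ k).radical := by
  classical
  have hle : powIdealExcept K ℓ k ≤ RingHom.ker (eval (Pi.single k (1 : K))) := by
    rw [powIdealExcept, Ideal.span_le]
    rintro _ ⟨j, hj, rfl⟩
    simp [show j ≠ k from hj, (hℓ j).ne']
  intro hX
  simpa using (RingHom.ker_isPrime _).radical_le_iff.mpr hle hX

end MvPolynomial

theorem gamma_eq_symbolic_power_of_omega_general
    (K : Type) [Field K] (n : ℕ)
    (ℓ : Fin n → ℕ) (hℓ : ∀ j, 0 < ℓ j) (m : ℕ) (hm : 0 < m) :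
    (⨅ k : Fin n,
        (Ideal.span ((fun j : Fin n => (X j : MvPolynomial (Fin n) K) ^ ℓ j) ''
          {j | j ≠ k})) ^ m) =
      symbolicPower
        (⨅ k : Fin n,
          Ideal.span ((fun j : Fin n => (X j : MvPolynomial (Fin n) K) ^ ℓ j) '' {j | j ≠ k}))
        m := by
  have hprimary {r : ℕ} (hr : r ≠ 0) (k : Fin n) := powIdealExcept_pow_isPrimary (K := K) hℓ hr k
  refine (symbolicPower_iInf_eq_iInf_pow (fun k => pow_one (powIdealExcept K ℓ k) ▸
    hprimary one_ne_zero k) (hprimary hm.ne') fun j k hjk hle => ?_).symm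
  exact X_notMem_radical_powIdealExcept hℓ k (hle (X_mem_radical_powIdealExcept ℓ hjk.symm))

/-- In `S = K[x_1,…,x_n]`, let
`Ω = ⋂_{k=1}^n (x_1^{ℓ_1},…,x̂_k^{ℓ_k},…,x_n^{ℓ_n})` and
`Γ = ⋂_{k=1}^n (x_1^{ℓ_1},…,x̂_k^{ℓ_k},…,x_n^{ℓ_n})^m`.  Then `Γ` equals the `m`-th
symbolic power `Ω^(m)` of `Ω`. -/
theorem gamma_eq_symbolic_power_of_omega
    (K : Type) [Field K] [Infinite K] (n : ℕ) (hn : 2 ≤ n)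
    (ℓ : Fin n → ℕ) (hℓ : ∀ j, 0 < ℓ j) (m : ℕ) (hm : 0 < m) :
    (⨅ k : Fin n,
        (Ideal.span ((fun j : Fin n => (X j : MvPolynomial (Fin n) K) ^ ℓ j) ''
          {j | j ≠ k})) ^ m) =
      symbolicPower
        (⨅ k : Fin n,
          Ideal.span ((fun j : Fin n => (X j : MvPolynomial (Fin n) K) ^ ℓ j) '' {j | j ≠ k}))
        m :=
  gamma_eq_symbolic_power_of_omega_general K n ℓ hℓ m hm
end
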